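/- Let I ⊆ [n] be nonempty and let I_1,…,I_k be the strongly connected components of I (i.e., of the induced subgraph of Γ on I). Then Y_I = ∏_{j=1}^k Y_{I_j}. -/

import Mathlib

open MvPolynomial

/-- Reachability inside a subset `U` of vertices, along edges of `E`. -/
def ReachIn {n : ℕ} (E : Fin n → Fin n → Prop) (U : Finset (Fin n)) (a b : Fin n) : Prop :=
  Relation.ReflTransGen (fun x y => E x y ∧ x ∈ U ∧ y ∈ U) a b

/-- A nonempty subset `I` is strongly connected if any vertex of `I` can reach any
other vertex of `I` by a directed path staying inside `I`. -/
def StronglyConnected {n : ℕ} (E : Fin n → Fin n → Prop) (I : Finset (Fin n)) : Prop :=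
  I.Nonempty ∧ ∀ a ∈ I, ∀ b ∈ I, ReachIn E I a b

open Classical in
/-- The strongly connected component of `x` in the induced subgraph on `U`. -/
noncomputable def scc {n : ℕ} (E : Fin n → Fin n → Prop) (U : Finset (Fin n)) (x : Fin n) :
    Finset (Fin n) :=
  U.filter fun y => ReachIn E U x y ∧ ReachIn E U y x

/-- `S ⊕ j` : the strongly connected component of `S ∪ {j}` containing `j`. -/
noncomputable def oplus {n : ℕ} (E : Fin n → Fin n → Prop) (S : Finset (Fin n)) (j : Fin n) :
    Finset (Fin n) :=
  scc E (insert j S) j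

/-- `S ⊖ j = (S ∪ {j}) − (S ⊕ j)`. -/
noncomputable def ominus {n : ℕ} (E : Fin n → Fin n → Prop) (S : Finset (Fin n)) (j : Fin n) :
    Finset (Fin n) :=
  insert j S \ oplus E S j

/-- A family of strongly connected subsets is nested if any two members are nested or
disjoint, and any tuple of pairwise disjoint members are exactly the strongly connected
components of their union. -/
def Nested {n : ℕ} (E : Fin n → Fin n → Prop) (𝒮 : Finset (Finset (Fin n))) : Prop :=
  (∀ I ∈ 𝒮, StronglyConnected E I) ∧
  (∀ I ∈ 𝒮, ∀ J ∈ 𝒮, I ⊆ J ∨ J ⊆ I ∨ Disjoint I J) ∧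
  (∀ 𝒯 ⊆ 𝒮, (∀ I ∈ 𝒯, ∀ J ∈ 𝒯, I ≠ J → Disjoint I J) →
    ∀ I ∈ 𝒯, ∀ x ∈ I, scc E (𝒯.sup id) x = I)

/-- The support of a collection: the union of its members. -/
def nsupport {n : ℕ} (𝒮 : Finset (Finset (Fin n))) : Finset (Fin n) := 𝒮.sup id

/-- A nested collection is maximal (for its support) if the only nested collection with the
same support containing it is itself. -/
def MaximalNested {n : ℕ} (E : Fin n → Fin n → Prop) (𝒮 : Finset (Finset (Fin n))) : Prop :=
  Nested E 𝒮 ∧ ∀ 𝒮' : Finset (Finset (Fin n)),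
    Nested E 𝒮' → nsupport 𝒮' = nsupport 𝒮 → 𝒮 ⊆ 𝒮' → 𝒮' = 𝒮

/-- The ambient field: rational functions in the indeterminates `A_1,…,A_n,X_1,…,X_n`. -/
abbrev Kn (n : ℕ) : Type := FractionRing (MvPolynomial (Fin n ⊕ Fin n) ℤ)

/-- The coefficient `A_i`, as an element of the ambient field. -/
noncomputable def AA {n : ℕ} (i : Fin n) : Kn n :=
  algebraMap (MvPolynomial (Fin n ⊕ Fin n) ℤ) (Kn n) (X (Sum.inl i))

/-- The initial cluster variable `X_i`, as an element of the ambient field. -/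
noncomputable def XX {n : ℕ} (i : Fin n) : Kn n :=
  algebraMap (MvPolynomial (Fin n ⊕ Fin n) ℤ) (Kn n) (X (Sum.inr i))

/-- `f` is acyclic on `I`: the only directed cycles in the graph `{i → f(i) : i ∈ I}`
are loops at fixed points. -/
def IsAcyclicOn {n : ℕ} (I : Finset (Fin n)) (f : Fin n → Fin n) : Prop :=
  ∀ i ∈ I, ∀ k : ℕ, 0 < k → (∀ r < k, f^[r] i ∈ I) → f^[k] i = i → f i = i

open Classical in
/-- The numerator `N_I` of `Y_I`: the generating function of acyclic functions `f : I → [n]`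
(encoded as functions `Fin n → Fin n` fixing every vertex outside `I`), where a fixed point
`i ∈ I` contributes `A_i` and a non-fixed point contributes `X_{f i}`. -/
noncomputable def Ynum {n : ℕ} (E : Fin n → Fin n → Prop) (I : Finset (Fin n)) :
    MvPolynomial (Fin n ⊕ Fin n) ℤ :=
  ∑ f : Fin n → Fin n,
    if (∀ i, i ∉ I → f i = i) ∧ (∀ i ∈ I, f i = i ∨ E i (f i)) ∧ IsAcyclicOn I f then
      ∏ i ∈ I, if f i = i then X (Sum.inl i) else X (Sum.inr (f i))
    else 0

/-- The Laurent polynomial `Y_I` (with `Y_∅ = 1`). -/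
noncomputable def YY {n : ℕ} (E : Fin n → Fin n → Prop) (I : Finset (Fin n)) : Kn n :=
  algebraMap (MvPolynomial (Fin n ⊕ Fin n) ℤ) (Kn n) (Ynum E I) / ∏ i ∈ I, XX i

open Classical in
/-- `P_S^{i,j}`: the sum of `Y_{S − p}` over all simple paths `p : i →_S j` in the graph,
whose intermediate vertices lie in `S`.  A path with `m` edges is encoded as an injective
map `v : Fin (m+1) → Fin n` whose consecutive values are edges. -/
noncomputable def PP {n : ℕ} (E : Fin n → Fin n → Prop) (S : Finset (Fin n)) (i j : Fin n) :
    Kn n :=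
  ∑ m ∈ Finset.range (n + 1), ∑ v : Fin (m + 1) → Fin n,
    if Function.Injective v ∧ v 0 = i ∧ v (Fin.last m) = j ∧
        (∀ r : Fin m, E (v r.castSucc) (v r.succ)) ∧
        (∀ r : Fin (m + 1), r ≠ 0 → r ≠ Fin.last m → v r ∈ S) then
      YY E (S \ Finset.image v Finset.univ)
    else 0

open Classical in
/-- The matrix `𝒴`, with diagonal entries `Y_{{i}}`, entries `−1` at edges of the graph,
and `0` elsewhere. -/
noncomputable def Ymat {n : ℕ} (E : Fin n → Fin n → Prop) : Matrix (Fin n) (Fin n) (Kn n) :=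
  Matrix.of fun i j => if i = j then YY E {i} else if E i j then -1 else 0

/-!
An admissible `f` sends each vertex of `I` to itself or along an edge, so a nontrivial cycle of
`f` runs along edges inside `I` and lies in a single strongly connected component. Hence, when
`C ⊆ I` is a union of components, admissible functions on `I` are exactly the gluings of
admissible functions on `C` and on `I \ C`; the weights multiply, so `N_I = N_C · N_{I \ C}`.
Splitting off one component at a time gives the product formula.
-/

lemma Relation.reflTransGen_iterate {α : Type*} {R : α → α → Prop} {f : α → α} {x : α}
    {k : ℕ} (h : ∀ r < k, R (f^[r] x) (f^[r + 1] x)) {r s : ℕ} (hrs : r ≤ s) (hsk : s ≤ k) :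
    Relation.ReflTransGen R (f^[r] x) (f^[s] x) := by
  induction s, hrs using Nat.le_induction with
  | base => exact .refl
  | succ s _ ih => exact (ih (by omega)).tail (h s hsk)

section Scc

variable {n : ℕ} {E : Fin n → Fin n → Prop} {U J : Finset (Fin n)} {a b x y : Fin n}

lemma ReachIn.mono (h : U ⊆ J) (hab : ReachIn E U a b) : ReachIn E J a b :=
  Relation.ReflTransGen.mono (fun _ _ ⟨e, hx, hy⟩ => ⟨e, h hx, h hy⟩) _ _ hab

open Classical in
lemma mem_scc_iff : y ∈ scc E U x ↔ y ∈ U ∧ ReachIn E U x y ∧ ReachIn E U y x :=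
  Finset.mem_filter

lemma mem_scc_self (hx : x ∈ U) : x ∈ scc E U x :=
  mem_scc_iff.2 ⟨hx, .refl, .refl⟩

lemma scc_subset : scc E U x ⊆ U :=
  fun _ hy => (mem_scc_iff.1 hy).1

lemma scc_eq_of_mem (hy : y ∈ scc E U x) : scc E U y = scc E U x := by
  obtain ⟨-, hxy, hyx⟩ := mem_scc_iff.1 hy
  ext z
  simp only [mem_scc_iff]
  exact ⟨fun ⟨hz, h1, h2⟩ => ⟨hz, hxy.trans h1, h2.trans hyx⟩,
    fun ⟨hz, h1, h2⟩ => ⟨hz, hyx.trans h1, h2.trans hxy⟩⟩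

lemma reachIn_scc_of_reachIn (hxa : ReachIn E U x a) (hab : ReachIn E U a b)
    (hbx : ReachIn E U b x) : ReachIn E (scc E U x) a b := by
  induction hab using Relation.ReflTransGen.head_induction_on with
  | refl => exact .refl
  | @head a c hac hcb ih =>
    obtain ⟨he, haU, hcU⟩ := hac
    have hxc : ReachIn E U x c := hxa.tail ⟨he, haU, hcU⟩
    have hcx : ReachIn E U c x := hcb.trans hbx
    exact .head ⟨he, mem_scc_iff.2 ⟨haU, hxa, hcx.head ⟨he, haU, hcU⟩⟩,
      mem_scc_iff.2 ⟨hcU, hxc, hcx⟩⟩ (ih hxc)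

lemma scc_eq_of_scc_subset (hJ : scc E U x ⊆ J) (hJU : J ⊆ U) : scc E J x = scc E U x := by
  ext z
  simp only [mem_scc_iff]
  refine ⟨fun ⟨hz, h1, h2⟩ => ⟨hJU hz, h1.mono hJU, h2.mono hJU⟩,
    fun ⟨hz, h1, h2⟩ => ?_⟩
  exact ⟨hJ (mem_scc_iff.2 ⟨hz, h1, h2⟩), (reachIn_scc_of_reachIn .refl h1 h2).mono hJ,
    (reachIn_scc_of_reachIn h1 h2 .refl).mono hJ⟩

lemma scc_subset_sdiff {I C : Finset (Fin n)} (hC : ∀ x ∈ C, scc E I x ⊆ C)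
    (hx : x ∈ I \ C) :
    scc E I x ⊆ I \ C := by
  intro z hz
  refine Finset.mem_sdiff.2 ⟨scc_subset hz, fun hzC => (Finset.mem_sdiff.1 hx).2 ?_⟩
  exact hC z hzC (scc_eq_of_mem hz ▸ mem_scc_self (Finset.mem_sdiff.1 hx).1)

end Scc

section Admissible

variable {n : ℕ} {E : Fin n → Fin n → Prop}

lemma iterate_mem_scc_of_cycle {U : Finset (Fin n)} {f : Fin n → Fin n} {i : Fin n} {k : ℕ}
    (hedge : ∀ j ∈ U, f j = j ∨ E j (f j)) (hne : f i ≠ i) (hk : 0 < k)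
    (hmem : ∀ r < k, f^[r] i ∈ U) (hcyc : f^[k] i = i) {r : ℕ} (hr : r < k) :
    f^[r] i ∈ scc E U i := by
  have hmem' : ∀ r ≤ k, f^[r] i ∈ U := fun r hr => by
    rcases hr.lt_or_eq with hr | rfl
    · exact hmem r hr
    · rw [hcyc]
      exact hmem 0 hk
  have hstep : ∀ r < k, (fun p q => E p q ∧ p ∈ U ∧ q ∈ U) (f^[r] i) (f^[r + 1] i) := by
    intro r hr
    -- a fixed point on the cycle would be reached again at time `k`, making `i` fixed
    have hmoves : f (f^[r] i) ≠ f^[r] i := by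
      intro hfix
      have hi : f^[k] i = f^[r] i := by
        rw [← Nat.sub_add_cancel hr.le, Function.iterate_add_apply, Function.iterate_fixed hfix]
      rw [hcyc] at hi
      rw [← hi] at hfix
      exact hne hfix
    rw [Function.iterate_succ_apply']
    exact ⟨(hedge _ (hmem r hr)).resolve_left hmoves, hmem r hr,
      Function.iterate_succ_apply' f r i ▸ hmem' (r + 1) hr⟩
  have hreach : ∀ r s, r ≤ s → s ≤ k → ReachIn E U (f^[r] i) (f^[s] i) :=
    fun _ _ => Relation.reflTransGen_iterate hstep
  have hback := hreach r k hr.le le_rfl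
  rw [hcyc] at hback
  exact mem_scc_iff.2 ⟨hmem r hr, hreach 0 r (Nat.zero_le r) hr.le, hback⟩

lemma IsAcyclicOn.of_eqOn_subset {S T : Finset (Fin n)} {f h : Fin n → Fin n}
    (hf : IsAcyclicOn T f) (hST : S ⊆ T) (hhf : ∀ x ∈ S, h x = f x) : IsAcyclicOn S h := by
  intro i hi k hk hmem hcyc
  have hiter : ∀ r ≤ k, h^[r] i = f^[r] i := by
    intro r hr
    induction r with
    | zero => rfl
    | succ r ih =>
      rw [Function.iterate_succ_apply', Function.iterate_succ_apply', ← ih (by omega),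
        hhf _ (hmem r hr)]
  rw [hhf i hi]
  exact hf i (hST hi) k hk (fun r hr => hiter r hr.le ▸ hST (hmem r hr)) (hiter k le_rfl ▸ hcyc)

def IsAdmissible (E : Fin n → Fin n → Prop) (I : Finset (Fin n)) (f : Fin n → Fin n) : Prop :=
  (∀ i, i ∉ I → f i = i) ∧ (∀ i ∈ I, f i = i ∨ E i (f i)) ∧ IsAcyclicOn I f

noncomputable def weight (I : Finset (Fin n)) (f : Fin n → Fin n) :
    MvPolynomial (Fin n ⊕ Fin n) ℤ :=
  ∏ i ∈ I, if f i = i then X (Sum.inl i) else X (Sum.inr (f i))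

lemma weight_congr {I : Finset (Fin n)} {f g : Fin n → Fin n} (h : ∀ i ∈ I, f i = g i) :
    weight I f = weight I g :=
  Finset.prod_congr rfl fun i hi => by rw [h i hi]

open Classical in
lemma Ynum_eq_sum_isAdmissible (E : Fin n → Fin n → Prop) (I : Finset (Fin n)) :
    Ynum E I = ∑ f ∈ Finset.univ.filter (IsAdmissible E I), weight I f := by
  rw [Ynum, Finset.sum_filter]
  exact Finset.sum_congr rfl fun f _ => if_congr Iff.rfl rfl rfl

lemma YY_empty (E : Fin n → Fin n → Prop) : YY E ∅ = 1 := by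
  classical
  have hadm : Finset.univ.filter (IsAdmissible E ∅) = {id} := by
    ext f
    simp only [Finset.mem_filter, Finset.mem_univ, true_and, Finset.mem_singleton]
    refine ⟨fun hf => funext fun i => hf.1 i (Finset.notMem_empty i), ?_⟩
    rintro rfl
    exact ⟨fun _ _ => rfl, fun _ => by simp, fun _ => by simp⟩
  rw [YY, Ynum_eq_sum_isAdmissible, hadm, Finset.sum_singleton, weight, Finset.prod_empty,
    map_one, Finset.prod_empty, div_one]

lemma IsAdmissible.restrict {I S : Finset (Fin n)} {h : Fin n → Fin n} (hh : IsAdmissible E I h)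
    (hSI : S ⊆ I) : IsAdmissible E S (S.piecewise h id) := by
  have hagree : ∀ x ∈ S, S.piecewise h id x = h x := fun x hx => S.piecewise_eq_of_mem _ _ hx
  refine ⟨fun i hi => S.piecewise_eq_of_notMem _ _ hi, fun i hi => ?_, ?_⟩
  · rw [hagree i hi]
    exact hh.2.1 i (hSI hi)
  · exact hh.2.2.of_eqOn_subset hSI hagree

variable {I C : Finset (Fin n)} (hCI : C ⊆ I) (hC : ∀ x ∈ C, scc E I x ⊆ C)
include hCI hC

lemma IsAdmissible.piecewise {f g : Fin n → Fin n} (hf : IsAdmissible E C f)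
    (hg : IsAdmissible E (I \ C) g) : IsAdmissible E I (C.piecewise f g) := by
  have hedge : ∀ i ∈ I, C.piecewise f g i = i ∨ E i (C.piecewise f g i) := by
    intro i hi
    by_cases hiC : i ∈ C
    · rw [C.piecewise_eq_of_mem _ _ hiC]
      exact hf.2.1 i hiC
    · rw [C.piecewise_eq_of_notMem _ _ hiC]
      exact hg.2.1 i (Finset.mem_sdiff.2 ⟨hi, hiC⟩)
  refine ⟨fun i hi => ?_, hedge, fun i hi k hk hmem hcyc => ?_⟩
  · rw [C.piecewise_eq_of_notMem _ _ fun hiC => hi (hCI hiC)]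
    exact hg.1 i fun hiD => hi (Finset.mem_sdiff.1 hiD).1
  by_contra hne
  have hscc : ∀ r < k, (C.piecewise f g)^[r] i ∈ scc E I i := fun r hr =>
    iterate_mem_scc_of_cycle hedge hne hk hmem hcyc hr
  by_cases hiC : i ∈ C
  · have hacyc : IsAcyclicOn C (C.piecewise f g) :=
      hf.2.2.of_eqOn_subset le_rfl fun x hx => C.piecewise_eq_of_mem _ _ hx
    exact hne (hacyc i hiC k hk (fun r hr => hC i hiC (hscc r hr)) hcyc)
  · have hiD : i ∈ I \ C := Finset.mem_sdiff.2 ⟨hi, hiC⟩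
    have hacyc : IsAcyclicOn (I \ C) (C.piecewise f g) :=
      hg.2.2.of_eqOn_subset le_rfl fun x hx =>
        C.piecewise_eq_of_notMem _ _ (Finset.mem_sdiff.1 hx).2
    exact hne (hacyc i hiD k hk (fun r hr => scc_subset_sdiff hC hiD (hscc r hr)) hcyc)

lemma Ynum_eq_mul_sdiff : Ynum E I = Ynum E C * Ynum E (I \ C) := by
  classical
  rw [Ynum_eq_sum_isAdmissible, Ynum_eq_sum_isAdmissible, Ynum_eq_sum_isAdmissible,
    Finset.sum_mul_sum, ← Finset.sum_product']
  refine Finset.sum_nbij' (fun h => (C.piecewise h id, (I \ C).piecewise h id))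
    (fun p => C.piecewise p.1 p.2) ?_ ?_ ?_ ?_ ?_
  · intro h hh
    simp only [Finset.mem_filter, Finset.mem_univ, true_and, Finset.mem_product] at hh ⊢
    exact ⟨hh.restrict hCI, hh.restrict Finset.sdiff_subset⟩
  · rintro ⟨f, g⟩ hp
    simp only [Finset.mem_filter, Finset.mem_univ, true_and, Finset.mem_product] at hp ⊢
    exact hp.1.piecewise hCI hC hp.2
  · intro h hh
    simp only [Finset.mem_filter, Finset.mem_univ, true_and] at hh
    ext x
    by_cases hxC : x ∈ C <;> by_cases hxI : x ∈ I <;> simp [Finset.piecewise, hxC, hxI, hh.1 x]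
  · rintro ⟨f, g⟩ hp
    simp only [Finset.mem_filter, Finset.mem_univ, true_and, Finset.mem_product] at hp
    ext x
    · by_cases hxC : x ∈ C <;> simp [Finset.piecewise, hxC, hp.1.1 x]
    · by_cases hxC : x ∈ C <;> by_cases hxI : x ∈ I <;>
        simp [Finset.piecewise, hxC, hxI, hp.2.1 x]
  · intro h _
    rw [weight, ← Finset.prod_sdiff hCI, mul_comm, ← weight, ← weight]
    congr 1 <;> exact weight_congr fun x hx => (Finset.piecewise_eq_of_mem _ _ _ hx).symm

lemma YY_eq_mul_sdiff : YY E I = YY E C * YY E (I \ C) := by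
  rw [YY, YY, YY, Ynum_eq_mul_sdiff hCI hC, map_mul, div_mul_div_comm, ← Finset.prod_sdiff hCI,
    mul_comm (∏ i ∈ I \ C, XX i)]

end Admissible

lemma image_scc_eq_insert {n : ℕ} {E : Fin n → Fin n → Prop} {I : Finset (Fin n)} {x : Fin n}
    (hx : x ∈ I) :
    I.image (scc E I) = insert (scc E I x) ((I \ scc E I x).image (scc E (I \ scc E I x))) := by
  set C := scc E I x
  have hC : ∀ y ∈ C, scc E I y ⊆ C := fun y hy => (scc_eq_of_mem hy).le
  have hD : ∀ y ∈ I \ C, scc E (I \ C) y = scc E I y := fun y hy =>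
    scc_eq_of_scc_subset (scc_subset_sdiff hC hy) Finset.sdiff_subset
  rw [Finset.image_congr hD]
  ext B
  simp only [Finset.mem_image, Finset.mem_insert, Finset.mem_sdiff]
  constructor
  · rintro ⟨y, hy, rfl⟩
    by_cases hyC : y ∈ C
    exacts [.inl (scc_eq_of_mem hyC), .inr ⟨y, ⟨hy, hyC⟩, rfl⟩]
  · rintro (rfl | ⟨y, ⟨hy, -⟩, rfl⟩)
    exacts [⟨x, hx, rfl⟩, ⟨y, hy, rfl⟩]

theorem stmt5_general (n : ℕ) (E : Fin n → Fin n → Prop)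
    (I : Finset (Fin n)) :
    YY E I = ∏ C ∈ I.image (fun x => scc E I x), YY E C := by
  induction I using Finset.strongInduction with
  | _ I ih =>
  obtain rfl | ⟨x, hx⟩ := I.eq_empty_or_nonempty
  · simp [YY_empty]
  set C := scc E I x
  have hxC : x ∈ C := mem_scc_self hx
  have hCnew : C ∉ (I \ C).image (scc E (I \ C)) := fun hmem => by
    obtain ⟨y, hy, hyC⟩ := Finset.mem_image.1 hmem
    exact (Finset.mem_sdiff.1 hy).2 (hyC ▸ mem_scc_self hy)
  rw [image_scc_eq_insert hx, Finset.prod_insert hCnew,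
    YY_eq_mul_sdiff scc_subset fun y hy => (scc_eq_of_mem hy).le,
    ih _ (Finset.sdiff_ssubset scc_subset ⟨x, hxC⟩)]

/-- `Y_I` is the product of the `Y_{I_j}` over the strongly connected components
`I_1,…,I_k` of `I`. -/
theorem stmt5 (n : ℕ) (E : Fin n → Fin n → Prop) (hE : ∀ i, ¬ E i i)
    (I : Finset (Fin n)) (hI : I.Nonempty) :
    YY E I = ∏ C ∈ I.image (fun x => scc E I x), YY E C :=
  stmt5_general n E I
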